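/- arXiv:1103.3239 — 3 statements merged into one kernel-verified Lean document; each statement's English description precedes it below -/
import Mathlib

section
/- For a finite join-semilattice A (with bottom), the maps exp : A → [A, 𝟚] given by exp(a) = λ b. ¬(b ≤ a) and log : [A, 𝟚] → A given by log(φ) = ⋁{a ∈ A | φ(a) = 0} are mutually inverse order-reversing bijections between A and the set of join-and-bottom-preserving maps A → 𝟚. -/
open Classical

universe u

variable {A : Type u} [SemilatticeSup A] [OrderBot A] [Fintype A]

/-- `exp : A → [A, 𝟚]`, `exp a = fun b => ¬ (b ≤ a)`, where `𝟚 = Prop` is the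
two-element join-semilattice. -/
noncomputable def expMap (a : A) : SupBotHom A Prop where
  toFun b := ¬ b ≤ a
  map_sup' b c := by simp [sup_le_iff, not_and_or]; tauto
  map_bot' := by simp

/-- `log : [A, 𝟚] → A`, `log φ = ⋁ {a | φ a = 0}`. -/
noncomputable def logMap (φ : SupBotHom A Prop) : A :=
  (Finset.univ.filter (fun a : A => ¬ φ a)).sup id

theorem SupBotHom.not_apply_finset_sup {α ι : Type*} [SemilatticeSup α] [OrderBot α]
    (φ : SupBotHom α Prop) (s : Finset ι) (f : ι → α) (h : ∀ i ∈ s, ¬ φ (f i)) :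
    ¬ φ (s.sup f) := by
  show φ (s.sup f) ≤ ⊥
  rw [map_finset_sup]
  exact Finset.sup_le h

section

variable {α : Type*} [SemilatticeSup α] [OrderBot α]

theorem expMap_apply (a b : α) : expMap a b ↔ ¬ b ≤ a := Iff.rfl

theorem expMap_antitone : Antitone (expMap (A := α)) :=
  fun _ _ hab _ hc hca => hc (hca.trans hab)

end

-- `φ` is monotone and, preserving finite joins, vanishes on `log φ` itself.
theorem le_logMap_iff (φ : SupBotHom A Prop) (b : A) : b ≤ logMap φ ↔ ¬ φ b := by
  refine ⟨fun hb hφb => ?_, fun hφb => Finset.le_sup (f := id) (by simpa using hφb)⟩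
  exact φ.not_apply_finset_sup _ id (fun a ha => (Finset.mem_filter.1 ha).2)
    (OrderHomClass.mono φ hb hφb)

theorem logMap_expMap (a : A) : logMap (expMap a) = a :=
  eq_of_forall_le_iff fun b => by rw [le_logMap_iff, expMap_apply, not_not]

theorem expMap_logMap (φ : SupBotHom A Prop) : expMap (logMap φ) = φ := by
  ext b
  rw [expMap_apply, le_logMap_iff, not_not]

theorem logMap_antitone : Antitone (logMap (A := A)) := fun φ ψ h =>
  (le_logMap_iff φ _).2 fun hφ => (le_logMap_iff ψ _).1 le_rfl (h _ hφ)

/-- for a finite join-semilattice `A` with bottom, `exp` and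
`log` are mutually inverse, order-reversing bijections between `A` and the
join-semilattice of join-and-bottom-preserving maps `A → 𝟚`. -/
theorem exp_log_antitone_bijection :
    Function.LeftInverse (logMap (A := A)) expMap ∧
    Function.RightInverse (logMap (A := A)) expMap ∧
    (∀ a b : A, a ≤ b → expMap b ≤ expMap a) ∧
    (∀ φ ψ : SupBotHom A Prop, φ ≤ ψ → logMap ψ ≤ logMap φ) :=
  ⟨logMap_expMap, expMap_logMap, fun _ _ => expMap_antitone.imp,
    fun _ _ => logMap_antitone.imp⟩
end

section
/- In the category of finite join-semilattices (with bottom), finite coproducts and finite products coincide: for finite semilattices A and B, the canonical map A + B → A × B sending (the image of) a to (a, 0) and b to (0, b) is an isomorphism, with inverse sending (a, b) to a ∨ b. -/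
/-!
The product `A × B` is a coproduct because every `(a, b)` is the join `(a, ⊥) ⊔ (⊥, b)` of the
images of the two injections: a join-preserving map out of `A × B` is therefore determined by
its restrictions `f` and `g`, and `(a, b) ↦ f a ⊔ g b`, the join of `f ∘ fst` and `g ∘ snd`,
is such a map.
-/

namespace SupBotHom

variable {α β : Type*} [SemilatticeSup α] [OrderBot α] [SemilatticeSup β] [OrderBot β]

variable (α β) in
def fst : SupBotHom (α × β) α where
  toFun := Prod.fst
  map_sup' _ _ := rfl
  map_bot' := rfl

variable (α β) in
def snd : SupBotHom (α × β) β where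
  toFun := Prod.snd
  map_sup' _ _ := rfl
  map_bot' := rfl

@[simp] theorem fst_apply (p : α × β) : fst α β p = p.1 := rfl

@[simp] theorem snd_apply (p : α × β) : snd α β p = p.2 := rfl

end SupBotHom

theorem Prod.mk_eq_sup_mk_bot {α β : Type*} [SemilatticeSup α] [OrderBot α]
    [SemilatticeSup β] [OrderBot β] (a : α) (b : β) : (a, b) = (a, ⊥) ⊔ (⊥, b) := by
  simp

theorem map_prod_mk_eq_sup {α β γ F : Type*} [SemilatticeSup α] [OrderBot α]
    [SemilatticeSup β] [OrderBot β] [Max γ] [FunLike F (α × β) γ] [SupHomClass F (α × β) γ]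
    (h : F) (a : α) (b : β) : h (a, b) = h (a, ⊥) ⊔ h (⊥, b) := by
  rw [← map_sup, ← Prod.mk_eq_sup_mk_bot]

theorem finite_semilattice_biproduct_general
    (A B : Type u) [SemilatticeSup A] [OrderBot A]
    [SemilatticeSup B] [OrderBot B] :
    ∀ (C : Type v) [SemilatticeSup C] [OrderBot C]
      (f : SupBotHom A C) (g : SupBotHom B C),
      (∃! h : SupBotHom (A × B) C,
        (∀ a : A, h (a, ⊥) = f a) ∧ (∀ b : B, h (⊥, b) = g b)) ∧
      (∀ h : SupBotHom (A × B) C,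
        ((∀ a : A, h (a, ⊥) = f a) ∧ (∀ b : B, h (⊥, b) = g b)) →
          ∀ (a : A) (b : B), h (a, b) = f a ⊔ g b) := by
  intro C _ _ f g
  have formula : ∀ h : SupBotHom (A × B) C,
      ((∀ a : A, h (a, ⊥) = f a) ∧ (∀ b : B, h (⊥, b) = g b)) →
        ∀ (a : A) (b : B), h (a, b) = f a ⊔ g b := by
    rintro h ⟨hf, hg⟩ a b
    rw [map_prod_mk_eq_sup, hf, hg]
  refine ⟨⟨f.comp (SupBotHom.fst A B) ⊔ g.comp (SupBotHom.snd A B), by simp, ?_⟩, formula⟩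
  intro h hh
  ext ⟨a, b⟩
  exact formula h hh a b

/-- in the category of finite join-semilattices with bottom,
finite coproducts and finite products coincide: for finite semilattices `A`
and `B`, the product `A × B`, equipped with the injections `a ↦ (a, ⊥)` and
`b ↦ (⊥, b)`, satisfies the universal property of the coproduct `A + B`
(so the canonical comparison map `A + B → A × B` is an isomorphism), and the
unique mediating morphism is `(a, b) ↦ f a ⊔ g b`, reflecting that the inverse
of the comparison map sends `(a, b)` to `a ∨ b`. -/
theorem finite_semilattice_biproduct
    (A B : Type u) [SemilatticeSup A] [OrderBot A] [Fintype A]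
    [SemilatticeSup B] [OrderBot B] [Fintype B] :
    ∀ (C : Type v) [SemilatticeSup C] [OrderBot C]
      (f : SupBotHom A C) (g : SupBotHom B C),
      (∃! h : SupBotHom (A × B) C,
        (∀ a : A, h (a, ⊥) = f a) ∧ (∀ b : B, h (⊥, b) = g b)) ∧
      (∀ h : SupBotHom (A × B) C,
        ((∀ a : A, h (a, ⊥) = f a) ∧ (∀ b : B, h (⊥, b) = g b)) →
          ∀ (a : A) (b : B), h (a, b) = f a ⊔ g b) :=
  finite_semilattice_biproduct_general A B
end

section
/- For a finite join-semilattice A, the double-dual map A → [[A,𝟚],𝟚] sending a to λφ. φ(a) is an isomorphism of join-semilattices. -/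
/-!
Identify `[B,𝟚]` with `Bᵒᵈ` through `c ↦ (a ↦ ¬ a ≤ c)`: every join-and-bottom-preserving
`φ : B → 𝟚` is of this form when `B` is finite, `c` being the join of the finite ideal
`{x | ¬ φ x}`. Moreover `φ ≤ (a ↦ ¬ a ≤ c)` holds exactly when `¬ φ c`, so applying the
identification twice gives back evaluation at `c`; the double-dual map is thus a composite
of two bijections.
-/

universe u

variable {A : Type u} [SemilatticeSup A] [OrderBot A] [Fintype A]

/-- The double-dual (evaluation) map `A → [[A,𝟚],𝟚]`, `a ↦ fun φ => φ a`,
where `𝟚 = Prop` is the two-element join-semilattice. -/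
def evalMap (a : A) : SupBotHom (SupBotHom A Prop) Prop where
  toFun φ := φ a
  map_sup' φ ψ := rfl
  map_bot' := rfl

namespace SupBotHom

variable {B : Type*} [SemilatticeSup B] [OrderBot B]

def notLe (c : B) : SupBotHom B Prop where
  toFun a := ¬ a ≤ c
  map_sup' a b := by simp only [sup_le_iff, not_and_or, sup_Prop_eq]
  map_bot' := by simp [Prop.bot_eq_false]

@[simp]
theorem notLe_apply (c a : B) : notLe c a ↔ ¬ a ≤ c := Iff.rfl

theorem le_notLe_iff (φ : SupBotHom B Prop) (c : B) : φ ≤ notLe c ↔ ¬ φ c := by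
  constructor
  · intro h hc
    exact h c hc le_rfl
  · intro hc a ha hac
    exact hc (OrderHomClass.mono φ hac ha)

theorem notLe_le_notLe_iff (c d : B) : notLe c ≤ notLe d ↔ d ≤ c := by
  simp [le_notLe_iff]

theorem notLe_injective : Function.Injective (notLe (B := B)) := fun c d h =>
  le_antisymm ((notLe_le_notLe_iff d c).1 h.ge) ((notLe_le_notLe_iff c d).1 h.le)

theorem notLe_surjective [Finite B] : Function.Surjective (notLe (B := B)) := by
  classical
  intro φ
  have := Fintype.ofFinite B
  let c := (Finset.univ.filter fun x => ¬ φ x).sup id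
  have hc : φ c ≤ ⊥ := by
    rw [map_finset_sup]
    exact Finset.sup_le fun x hx => (Finset.mem_filter.1 hx).2
  refine ⟨c, le_antisymm (fun a ha => ?_) ((le_notLe_iff φ c).2 hc)⟩
  by_contra hφa
  exact ha (Finset.le_sup (f := id) (by simpa using hφa))

theorem notLe_bijective [Finite B] : Function.Bijective (notLe (B := B)) :=
  ⟨notLe_injective, notLe_surjective⟩

theorem notLe_notLe (c : B) : notLe (notLe c) = evalMap c := by
  ext φ
  simp only [notLe_apply, le_notLe_iff, not_not]
  rfl

end SupBotHom

section

open SupBotHom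

variable {B : Type*} [SemilatticeSup B] [OrderBot B]

theorem evalMap_bijective [Finite B] : Function.Bijective (evalMap (A := B)) := by
  have : Finite (SupBotHom B Prop) := Finite.of_injective _ DFunLike.coe_injective
  have h : evalMap (A := B) = notLe ∘ notLe := funext fun c => (notLe_notLe c).symm
  exact h ▸ notLe_bijective.comp notLe_bijective

theorem evalMap_sup (a b : B) : evalMap (a ⊔ b) = evalMap a ⊔ evalMap b := by
  ext φ
  exact (map_sup φ a b).to_iff

theorem evalMap_bot : evalMap (⊥ : B) = ⊥ := by
  ext φ
  exact (map_bot φ).to_iff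

end

/-- for a finite join-semilattice `A`, the double-dual map
`a ↦ (fun φ => φ a)` is an isomorphism of join-semilattices
`A ≅ [[A,𝟚],𝟚]`: it is bijective and preserves joins and bottom. -/
theorem double_dual_iso :
    Function.Bijective (evalMap (A := A)) ∧
    (∀ a b : A, evalMap (a ⊔ b) = evalMap a ⊔ evalMap b) ∧
    evalMap (⊥ : A) = ⊥ :=
  ⟨evalMap_bijective, evalMap_sup, evalMap_bot⟩
end
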